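/- arXiv:0902.3081 — 2 statements merged into one kernel-verified Lean document; each statement's English description precedes it below -/
import Mathlib

section
/- Let F be a rooted forest partitioned into pairwise disjoint subforests F_1,…,F_t (each F_i a union of some of the trees of F), and let I be an interval of integers partitioned into pairwise disjoint intervals I_1,…,I_t. If for each i there exists an ancestry mapping from F_i into U_k(I_i), then there exists an ancestry mapping from F into U_k(I). -/
/-- A rooted forest on a finite vertex type `V`: each vertex has an optional
parent, and the depth of a root is `1` while the depth of a child is one more
than the depth of its parent (in particular the parent relation is acyclic). -/
structure RootedForest (V : Type) [Fintype V] where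
  parent : V → Option V
  depth : V → ℕ
  depth_root : ∀ v, parent v = none → depth v = 1
  depth_parent : ∀ v u, parent v = some u → depth v = depth u + 1

/-- `u` is a (strict) ancestor of `v`: `u` lies on the path from `v` to its root. -/
def RootedForest.Ancestor {V : Type} [Fintype V] (F : RootedForest V) (u v : V) : Prop :=
  Relation.TransGen (fun a b => F.parent a = some b) v u

/-- `c_i = 1 + Σ_{j=1}^i 1/j²`. -/
def cseq (k : ℕ) : ℚ := 1 + ∑ j ∈ Finset.Icc 1 k, (1 : ℚ) / (j : ℚ) ^ 2

/-- `H_i = 1 + 3·n·d·i²/2^{i-1}`. -/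
def Hval (n d i : ℕ) : ℚ := 1 + 3 * n * d * (i : ℚ) ^ 2 / 2 ^ (i - 1)

/-- `J_i = 2·d·c_i·i²`. -/
def Jval (d i : ℕ) : ℚ := 2 * d * cseq i * (i : ℚ) ^ 2

/-- `x_0 = 1` and, for `i ≥ 1`, `x_i = ⌈2^{i-1}/(d·i²)⌉` (ceiling division). -/
def xval (d i : ℕ) : ℕ := if i = 0 then 1 else (2 ^ (i - 1) + d * i ^ 2 - 1) / (d * i ^ 2)

/-- The interval associated with a triplet: `I_{0,ν,0} = {ν}` and, for `i ≥ 1`,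
`I_{i,h,j} = [x_i·h, x_i·(h+j))`. -/
def tripInterval (d : ℕ) (t : ℕ × ℕ × ℕ) : Set ℕ :=
  if t.1 = 0 then {t.2.1}
  else Set.Ico (xval d t.1 * t.2.1) (xval d t.1 * (t.2.1 + t.2.2))

/-- `U_k(I)`: the triplets `(0,ν,0)` with `ν ∈ I`, together with the triplets
`(i,h,j)` with `1 ≤ i ≤ k`, `h ∈ [0,H_i)`, `j ∈ [1,J_i)` whose associated
interval is contained in `I`. -/
def Uset (n d k : ℕ) (I : Set ℕ) : Set (ℕ × ℕ × ℕ) :=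
  {t | (t.1 = 0 ∧ t.2.2 = 0 ∧ t.2.1 ∈ I) ∨
       (1 ≤ t.1 ∧ t.1 ≤ k ∧ ((t.2.1 : ℚ) < Hval n d t.1) ∧
        1 ≤ t.2.2 ∧ ((t.2.2 : ℚ) < Jval d t.1) ∧ tripInterval d t ⊆ I)}

/-!
The glued mapping sends `v` to its image under the mapping of the part containing it. Within a
part nothing changes. Two vertices in different parts are never related by ancestry, because
the parts are closed under the parent map; and their intervals are nonempty and lie in the
disjoint intervals `I_i`, so they are neither equal nor nested.
-/

theorem RootedForest.mem_iff_mem_of_ancestor {V : Type} [Fintype V] (F : RootedForest V)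
    {S : Set V} (hS : ∀ v u, F.parent v = some u → (v ∈ S ↔ u ∈ S)) {u v : V}
    (huv : F.Ancestor u v) : v ∈ S ↔ u ∈ S := by
  induction huv with
  | single h => exact hS _ _ h
  | tail _ h ih => exact ih.trans (hS _ _ h)

lemma xval_pos {d : ℕ} (hd : d ≠ 0) (i : ℕ) : 0 < xval d i := by
  unfold xval
  split_ifs with hi
  · exact Nat.one_pos
  · have hdi : 0 < d * i ^ 2 := by positivity
    have h2 : 1 ≤ 2 ^ (i - 1) := Nat.one_le_two_pow
    exact Nat.div_pos (by omega) hdi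

lemma Uset_mono (n d k : ℕ) {I J : Set ℕ} (hIJ : I ⊆ J) : Uset n d k I ⊆ Uset n d k J := by
  rintro t (⟨h0, hj, hI⟩ | ⟨h1, hk, hH, hj1, hJ, hsub⟩)
  · exact Or.inl ⟨h0, hj, hIJ hI⟩
  · exact Or.inr ⟨h1, hk, hH, hj1, hJ, hsub.trans hIJ⟩

lemma tripInterval_subset_of_mem_Uset {n d k : ℕ} {I : Set ℕ} {t : ℕ × ℕ × ℕ}
    (ht : t ∈ Uset n d k I) : tripInterval d t ⊆ I := by
  rcases ht with ⟨h0, -, hI⟩ | ⟨-, -, -, -, -, hsub⟩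
  · simpa [tripInterval, h0] using hI
  · exact hsub

lemma tripInterval_nonempty_of_mem_Uset {n d k : ℕ} {I : Set ℕ} {t : ℕ × ℕ × ℕ}
    (ht : t ∈ Uset n d k I) : (tripInterval d t).Nonempty := by
  rcases ht with ⟨h0, -, -⟩ | ⟨h1, -, -, hj1, hJ, -⟩
  · simp [tripInterval, h0]
  · -- `J_i = 0` when `d = 0`, so then only the singleton triplets `(0,ν,0)` lie in `U_k(I)`
    have hd : d ≠ 0 := by
      rintro rfl
      simp only [Jval, Nat.cast_zero, mul_zero, zero_mul] at hJ
      exact absurd hJ (not_lt.mpr t.2.2.cast_nonneg)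
    rw [tripInterval, if_neg (by omega)]
    exact Set.nonempty_Ico.mpr (Nat.mul_lt_mul_of_pos_left (by omega) (xval_pos hd t.1))

lemma apply_eq_apply_of_existsUnique_mem {V ι β : Type*} {P : ι → Set V}
    (hpart : ∀ v, ∃! i, v ∈ P i) {p : V → ι} (hp : ∀ v, v ∈ P (p v)) (L : ∀ i, P i → β)
    {i : ι} {v : V} (hv : v ∈ P i) : L (p v) ⟨v, hp v⟩ = L i ⟨v, hv⟩ := by
  obtain rfl : p v = i := (hpart v).unique (hp v) hv
  rfl

theorem ancestry_mapping_glue_general (n d k t : ℕ)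
    (V : Type) [Fintype V] (F : RootedForest V)
    (P : Fin t → Set V) (I : Fin t → Set ℕ) (a b : ℕ)
    (hpart : ∀ v : V, ∃! i : Fin t, v ∈ P i)
    (hclosed : ∀ (i : Fin t) (v u : V), F.parent v = some u → (v ∈ P i ↔ u ∈ P i))
    (hIdisj : Pairwise fun i j => Disjoint (I i) (I j))
    (hIunion : (⋃ i, I i) = Set.Ico a b)
    (hmaps : ∀ i : Fin t, ∃ L : {x : V // x ∈ P i} → ℕ × ℕ × ℕ,
      (∀ x, L x ∈ Uset n d k (I i)) ∧ Function.Injective L ∧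
      ∀ x y : {x : V // x ∈ P i},
        F.Ancestor x.1 y.1 ↔ tripInterval d (L y) ⊂ tripInterval d (L x)) :
    ∃ L : V → ℕ × ℕ × ℕ,
      (∀ v, L v ∈ Uset n d k (Set.Ico a b)) ∧ Function.Injective L ∧
      ∀ u v : V, F.Ancestor u v ↔ tripInterval d (L v) ⊂ tripInterval d (L u) := by
  choose p hp using fun v => (hpart v).exists
  choose L hLU hLinj hLanc using hmaps
  set M : V → ℕ × ℕ × ℕ := fun v => L (p v) ⟨v, hp v⟩
  have hMU (v : V) : M v ∈ Uset n d k (I (p v)) := hLU _ _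
  have hMne (v : V) : (tripInterval d (M v)).Nonempty := tripInterval_nonempty_of_mem_Uset (hMU v)
  have hMdisj {u v : V} (huv : p u ≠ p v) :
      Disjoint (tripInterval d (M u)) (tripInterval d (M v)) :=
    (hIdisj huv).mono (tripInterval_subset_of_mem_Uset (hMU u))
      (tripInterval_subset_of_mem_Uset (hMU v))
  have hM_same_part {u v : V} (huv : p u = p v) :
      M u = L (p u) ⟨u, hp u⟩ ∧ M v = L (p u) ⟨v, huv ▸ hp v⟩ :=
    ⟨rfl, apply_eq_apply_of_existsUnique_mem hpart hp L _⟩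
  refine ⟨M, fun v => Uset_mono n d k (hIunion ▸ Set.subset_iUnion I (p v)) (hMU v), ?_, ?_⟩
  · intro u v huv
    by_cases hpuv : p u = p v
    · obtain ⟨hu, hv⟩ := hM_same_part hpuv
      exact congrArg Subtype.val (hLinj _ (hu ▸ hv ▸ huv))
    · exact absurd ((hMdisj hpuv).eq_bot_of_le (huv ▸ le_rfl)) (hMne u).ne_empty
  · intro u v
    by_cases hpuv : p u = p v
    · obtain ⟨hu, hv⟩ := hM_same_part hpuv
      rw [hu, hv, ← hLanc]
    · refine ⟨fun h => ?_, fun h => ?_⟩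
      · have hv : v ∈ P (p u) := (F.mem_iff_mem_of_ancestor (hclosed (p u)) h).mpr (hp u)
        exact absurd ((hpart v).unique (hp v) hv) (Ne.symm hpuv)
      · exact absurd ((hMdisj hpuv).symm.eq_bot_of_le h.1) (hMne v).ne_empty

/-- If a rooted forest `F` splits into sub-forests `P 1, …, P t` (each closed under the
parent relation), an interval `[a,b)` splits into pairwise disjoint intervals
`I 1, …, I t`, and each sub-forest admits an ancestry mapping into `U_k(I i)`,
then `F` admits an ancestry mapping into `U_k([a,b))`. -/
theorem ancestry_mapping_glue (n d k t : ℕ) (hd : 1 ≤ d)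
    (V : Type) [Fintype V] (F : RootedForest V)
    (P : Fin t → Set V) (I : Fin t → Set ℕ) (a b : ℕ) (av bv : Fin t → ℕ)
    (hpart : ∀ v : V, ∃! i : Fin t, v ∈ P i)
    (hclosed : ∀ (i : Fin t) (v u : V), F.parent v = some u → (v ∈ P i ↔ u ∈ P i))
    (hIint : ∀ i, I i = Set.Ico (av i) (bv i))
    (hIdisj : Pairwise fun i j => Disjoint (I i) (I j))
    (hIunion : (⋃ i, I i) = Set.Ico a b)
    (hmaps : ∀ i : Fin t, ∃ L : {x : V // x ∈ P i} → ℕ × ℕ × ℕ,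
      (∀ x, L x ∈ Uset n d k (I i)) ∧ Function.Injective L ∧
      ∀ x y : {x : V // x ∈ P i},
        F.Ancestor x.1 y.1 ↔ tripInterval d (L y) ⊂ tripInterval d (L x)) :
    ∃ L : V → ℕ × ℕ × ℕ,
      (∀ v, L v ∈ Uset n d k (Set.Ico a b)) ∧ Function.Injective L ∧
      ∀ u v : V, F.Ancestor u v ↔ tripInterval d (L v) ⊂ tripInterval d (L u) :=
  ancestry_mapping_glue_general n d k t V F P I a b hpart hclosed hIdisj hIunion hmaps
end

section
/- For every k with 0 ≤ k ≤ log₂ n, every rooted forest F of size |F| ≤ 2^k with depth at most d, and every integer interval I ⊆ [1, 3n) with |I| = ⌊c_k·|F|⌋, there exists an ancestry mapping of F into U_k(I). -/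
open Finset Relation

lemma Nat.floor_add_floor_le {α : Type*} [Semifield α] [LinearOrder α] [IsStrictOrderedRing α]
    [FloorSemiring α] {a b : α} (ha : 0 ≤ a) (hb : 0 ≤ b) : ⌊a⌋₊ + ⌊b⌋₊ ≤ ⌊a + b⌋₊ :=
  Nat.le_floor (by push_cast; exact _root_.add_le_add (Nat.floor_le ha) (Nat.floor_le hb))

lemma Nat.mul_div_add_one_le (m x : ℕ) : x * (m / x + 1) ≤ m + x := by
  rw [Nat.mul_add_one]
  exact Nat.add_le_add_right (Nat.mul_div_le m x) x

lemma one_le_cseq (k : ℕ) : 1 ≤ cseq k :=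
  le_add_of_nonneg_right (sum_nonneg fun _ _ => by positivity)

lemma cseq_nonneg (k : ℕ) : 0 ≤ cseq k := zero_le_one.trans (one_le_cseq k)

lemma cseq_succ (k : ℕ) : cseq (k + 1) = cseq k + 1 / ((k : ℚ) + 1) ^ 2 := by
  rw [cseq, cseq, sum_Icc_succ_top (by omega)]
  push_cast
  ring

lemma cseq_mono : Monotone cseq :=
  monotone_nat_of_le_succ fun k => by rw [cseq_succ]; exact le_add_of_nonneg_right (by positivity)

lemma two_le_cseq {k : ℕ} (hk : 1 ≤ k) : 2 ≤ cseq k :=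
  (by norm_num [cseq] : (2 : ℚ) = cseq 1) ▸ cseq_mono hk

lemma floor_cseq_mul_add_le (k M N : ℕ) :
    ⌊cseq k * M⌋₊ + ⌊cseq k * N⌋₊ ≤ ⌊cseq k * (M + N : ℕ)⌋₊ := by
  rw [Nat.cast_add, mul_add]
  exact Nat.floor_add_floor_le (mul_nonneg (cseq_nonneg k) (Nat.cast_nonneg _))
    (mul_nonneg (cseq_nonneg k) (Nat.cast_nonneg _))

lemma xval_of_ne_zero {d i : ℕ} (hi : i ≠ 0) :
    xval d i = (2 ^ (i - 1) + d * i ^ 2 - 1) / (d * i ^ 2) :=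
  if_neg hi

lemma one_le_xval {d : ℕ} (hd : 1 ≤ d) (i : ℕ) : 1 ≤ xval d i := by
  rcases eq_or_ne i 0 with rfl | hi
  · simp [xval]
  · rw [xval_of_ne_zero hi, Nat.one_le_div_iff (by positivity)]
    have := Nat.one_le_two_pow (n := i - 1)
    omega

lemma pow_le_xval_mul {d i : ℕ} (hd : 1 ≤ d) (hi : i ≠ 0) :
    2 ^ (i - 1) ≤ xval d i * (d * i ^ 2) := by
  have := le_smul_ceilDiv (b := 2 ^ (i - 1)) (show 0 < d * i ^ 2 by positivity)
  rwa [smul_eq_mul, Nat.ceilDiv_eq_add_pred_div, mul_comm, ← xval_of_ne_zero hi] at this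

lemma xval_mul_lt {d i : ℕ} (hi : i ≠ 0) :
    xval d i * (d * i ^ 2) < 2 ^ (i - 1) + d * i ^ 2 := by
  rw [xval_of_ne_zero hi]
  have := Nat.div_mul_le_self (2 ^ (i - 1) + d * i ^ 2 - 1) (d * i ^ 2)
  have := Nat.one_le_two_pow (n := i - 1)
  omega

lemma lt_Hval {n d i h : ℕ} (hd : 1 ≤ d) (hi : i ≠ 0) (hh : xval d i * h < 3 * n) :
    (h : ℚ) < Hval n d i := by
  have hx : ((2 ^ (i - 1) : ℕ) : ℚ) ≤ xval d i * (d * i ^ 2) := by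
    exact_mod_cast pow_le_xval_mul hd hi
  have hh' : (xval d i * h : ℚ) < 3 * n := by exact_mod_cast hh
  have hdi : (0 : ℚ) < d * i ^ 2 := by
    have : 0 < d * i ^ 2 := by positivity
    exact_mod_cast this
  push_cast at hx
  rw [Hval, ← sub_lt_iff_lt_add', lt_div_iff₀ (by positivity)]
  nlinarith [mul_le_mul_of_nonneg_left hx (Nat.cast_nonneg (α := ℚ) h),
    mul_lt_mul_of_pos_right hh' hdi, (by positivity : (0 : ℚ) < 2 ^ (i - 1))]

lemma lt_Jval {d i j : ℕ} (hd : 1 ≤ d) (hi : i ≠ 0)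
    (hj : (xval d i * j : ℚ) < cseq i * 2 ^ i) : (j : ℚ) < Jval d i := by
  have hx : ((2 ^ (i - 1) : ℕ) : ℚ) ≤ xval d i * (d * i ^ 2) := by
    exact_mod_cast pow_le_xval_mul hd hi
  have h2 : (2 : ℚ) ^ i = 2 * 2 ^ (i - 1) := by rw [← pow_succ', Nat.sub_add_cancel (by omega)]
  have hx1 : (1 : ℚ) ≤ xval d i := by exact_mod_cast one_le_xval hd i
  push_cast at hx
  have : (xval d i : ℚ) * j < xval d i * Jval d i := by
    rw [Jval]; nlinarith [one_le_cseq i]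
  exact lt_of_mul_lt_mul_left this (by positivity)

lemma succ_mul_xval_le {d k q N : ℕ} (hq : 1 ≤ q) (hqd : q + 1 ≤ d) (hN : 2 ^ k < N) :
    ((q + 1) * xval d (k + 1) : ℚ) ≤ cseq k * q + N / ((k : ℚ) + 1) ^ 2 := by
  have hx : ((xval d (k + 1) * (d * (k + 1) ^ 2) + 1 : ℕ) : ℚ) ≤ (2 ^ k + d * (k + 1) ^ 2 : ℕ) :=
    by exact_mod_cast xval_mul_lt (d := d) k.succ_ne_zero
  push_cast at hx
  have hN' : (2 : ℚ) ^ k + 1 ≤ N := by exact_mod_cast hN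
  have hqd' : (q : ℚ) + 1 ≤ d := by exact_mod_cast hqd
  have hq' : (1 : ℚ) ≤ q := by exact_mod_cast hq
  have hk2 : (0 : ℚ) < ((k : ℚ) + 1) ^ 2 := by positivity
  have hc : ((q : ℚ) + 1) * ((k : ℚ) + 1) ^ 2 ≤ cseq k * q * ((k : ℚ) + 1) ^ 2 + 2 := by
    rcases Nat.eq_zero_or_pos k with rfl | hk
    · norm_num [cseq]
    · have : (q : ℚ) + 1 ≤ cseq k * q := by nlinarith [two_le_cseq hk]
      nlinarith
  have hA : ((q + 1) * xval d (k + 1) : ℚ) * ((k : ℚ) + 1) ^ 2 ≤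
      2 ^ k - 1 + ((q : ℚ) + 1) * ((k : ℚ) + 1) ^ 2 := by
    refine le_of_mul_le_mul_left ?_ (by linarith : (0 : ℚ) < d)
    nlinarith [one_le_pow₀ (one_le_two : (1 : ℚ) ≤ 2) (n := k)]
  rw [← sub_le_iff_le_add', le_div_iff₀ hk2]
  nlinarith

lemma floor_cseq_add_le {d k q M : ℕ} (hq : 1 ≤ q) (hqd : q + 1 ≤ d) (hN : 2 ^ k < M + q) :
    ⌊cseq k * M⌋₊ + (q + 1) * xval d (k + 1) ≤ ⌊cseq (k + 1) * (M + q : ℕ)⌋₊ := by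
  have hfl := Nat.floor_le (mul_nonneg (cseq_nonneg k) (Nat.cast_nonneg (α := ℚ) M))
  have hkey := succ_mul_xval_le (d := d) hq hqd hN
  refine Nat.le_floor ?_
  push_cast at hkey ⊢
  rw [cseq_succ]
  have : (cseq k + 1 / ((k : ℚ) + 1) ^ 2) * (M + q) =
      cseq k * M + (cseq k * q + (M + q) / ((k : ℚ) + 1) ^ 2) := by ring
  linarith

/-- The triplets of `U_k`, without the constraints `h < H_i` and `I_t ⊆ I`. -/
def Admissible (d k : ℕ) (t : ℕ × ℕ × ℕ) : Prop :=
  (t.1 = 0 ∧ t.2.2 = 0) ∨ (1 ≤ t.1 ∧ t.1 ≤ k ∧ 1 ≤ t.2.2 ∧ (t.2.2 : ℚ) < Jval d t.1)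

lemma Admissible.mono {d k k' : ℕ} {t : ℕ × ℕ × ℕ} (h : Admissible d k t) (hk : k ≤ k') :
    Admissible d k' t :=
  h.imp_right fun ⟨h1, h2, h3⟩ => ⟨h1, h2.trans hk, h3⟩

/-- While a heavy path is being laid out, the bound `j < J_{k+1}` on its triplets is not yet
known; it follows once the whole path is placed. -/
def PreAdmissible (d k : ℕ) (t : ℕ × ℕ × ℕ) : Prop :=
  Admissible d k t ∨ (t.1 = k + 1 ∧ 1 ≤ t.2.2)

lemma mem_Uset_of_admissible {n d k a b : ℕ} {t : ℕ × ℕ × ℕ} (hd : 1 ≤ d)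
    (ht : Admissible d k t) (hsub : tripInterval d t ⊆ Set.Ico a b) (hb : b ≤ 3 * n) :
    t ∈ Uset n d k (Set.Ico a b) := by
  obtain ⟨i, h, j⟩ := t
  rcases ht with ⟨rfl, rfl⟩ | ⟨hi, hik, hj, hJ⟩
  · exact Or.inl ⟨rfl, rfl, hsub (by simp [tripInterval])⟩
  · simp only at hi hj
    have hi0 : i ≠ 0 := by omega
    have hx : xval d i * h < xval d i * (h + j) :=
      Nat.mul_lt_mul_of_pos_left (by omega) (one_le_xval hd i)
    have hmem : xval d i * h ∈ Set.Ico a b := hsub (by simp [tripInterval, hi0, hx])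
    exact Or.inr ⟨hi, hik, lt_Hval hd hi0 (hmem.2.trans_le hb), hj, hJ, hsub⟩

def levelTriplet (d i α β : ℕ) : ℕ × ℕ × ℕ := (i, α / xval d i, (β - α) / xval d i)

lemma tripInterval_levelTriplet {d i α β : ℕ} (hi : i ≠ 0) (hα : xval d i ∣ α)
    (hβ : xval d i ∣ β) (hαβ : α ≤ β) : tripInterval d (levelTriplet d i α β) = Set.Ico α β := by
  simp only [tripInterval, levelTriplet, hi, if_false]
  rw [Nat.mul_add, Nat.mul_div_cancel' hα, Nat.mul_div_cancel' (Nat.dvd_sub hβ hα),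
    Nat.add_sub_cancel' hαβ]

lemma mul_le_sub_of_tripInterval_subset {d α β : ℕ} {t : ℕ × ℕ × ℕ} (hd : 1 ≤ d)
    (ht : t.1 ≠ 0) (hj : 1 ≤ t.2.2) (h : tripInterval d t ⊆ Set.Ico α β) :
    xval d t.1 * t.2.2 ≤ β - α := by
  obtain ⟨i, h', j⟩ := t
  have hx := one_le_xval hd i
  simp only [tripInterval, ht, if_false] at h ⊢
  rw [Set.Ico_subset_Ico_iff (by nlinarith), Nat.mul_add] at h
  omega

namespace RootedForest

section Structure

variable {V : Type} [Fintype V] (F : RootedForest V)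

def AncestorOrSelf (u v : V) : Prop :=
  ReflTransGen (fun a b => F.parent a = some b) v u

open scoped Classical in
noncomputable def subtree (v : V) : Finset V := univ.filter (F.AncestorOrSelf v)

open scoped Classical in
noncomputable def children (v : V) : Finset V := univ.filter (F.parent · = some v)

open scoped Classical in
noncomputable def roots : Finset V := univ.filter (F.parent · = none)

variable {F}

lemma one_le_depth (v : V) : 1 ≤ F.depth v := by
  cases h : F.parent v with
  | none => rw [F.depth_root v h]
  | some u => rw [F.depth_parent v u h]; omega

lemma Ancestor.depth_lt {u v : V} (h : F.Ancestor u v) : F.depth u < F.depth v := by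
  induction h with
  | single h => rw [F.depth_parent _ _ h]; omega
  | tail _ h ih => rw [F.depth_parent _ _ h] at ih; omega

lemma ancestor_irrefl (v : V) : ¬F.Ancestor v v := fun h => h.depth_lt.false

lemma ancestorOrSelf_iff {u v : V} : F.AncestorOrSelf u v ↔ u = v ∨ F.Ancestor u v :=
  reflTransGen_iff_eq_or_transGen

lemma Ancestor.ancestorOrSelf {u v : V} (h : F.Ancestor u v) : F.AncestorOrSelf u v :=
  ancestorOrSelf_iff.mpr (Or.inr h)

lemma AncestorOrSelf.eq_of_depth_eq {u v : V} (h : F.AncestorOrSelf u v)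
    (hd : F.depth u = F.depth v) : u = v :=
  (ancestorOrSelf_iff.mp h).resolve_right fun h' => h'.depth_lt.ne hd

lemma AncestorOrSelf.trans {u v w : V} (huv : F.AncestorOrSelf u v)
    (hvw : F.AncestorOrSelf v w) : F.AncestorOrSelf u w :=
  ReflTransGen.trans hvw huv

/-- The ancestors of a vertex form a chain, because every vertex has at most one parent. -/
lemma AncestorOrSelf.total {u v w : V} (hu : F.AncestorOrSelf u w)
    (hv : F.AncestorOrSelf v w) : F.AncestorOrSelf u v ∨ F.AncestorOrSelf v u :=
  (ReflTransGen.total_of_right_unique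
    (fun _ _ _ hb hc => Option.some_injective _ (hb.symm.trans hc)) hu hv).symm

lemma mem_subtree {v w : V} : w ∈ F.subtree v ↔ F.AncestorOrSelf v w := by
  simp [subtree]

lemma self_mem_subtree (v : V) : v ∈ F.subtree v := mem_subtree.mpr ReflTransGen.refl

lemma mem_children {v c : V} : c ∈ F.children v ↔ F.parent c = some v := by
  simp [children]

lemma mem_roots {r : V} : r ∈ F.roots ↔ F.parent r = none := by
  simp [roots]

lemma not_comparable_of_mem_subtree {R : Finset V}
    (hR : (R : Set V).Pairwise fun u v => ¬F.AncestorOrSelf u v) {r r' u w : V} (hr : r ∈ R)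
    (hr' : r' ∈ R) (hne : r ≠ r') (hu : u ∈ F.subtree r) (hw : w ∈ F.subtree r') :
    ¬F.AncestorOrSelf u w ∧ ¬F.AncestorOrSelf w u := by
  rw [mem_subtree] at hu hw
  constructor <;> intro h
  · rcases (hu.trans h).total hw with h' | h'
    exacts [hR hr hr' hne h', hR hr' hr hne.symm h']
  · rcases (hw.trans h).total hu with h' | h'
    exacts [hR hr' hr hne.symm h', hR hr hr' hne h']

lemma pairwise_not_ancestorOrSelf_of_depth_eq {R : Finset V} {m : ℕ}
    (hR : ∀ r ∈ R, F.depth r = m) :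
    (R : Set V).Pairwise fun u v => ¬F.AncestorOrSelf u v :=
  fun u hu v hv huv h => huv (h.eq_of_depth_eq ((hR u hu).trans (hR v hv).symm))

lemma pairwise_children (v : V) :
    (F.children v : Set V).Pairwise fun u w => ¬F.AncestorOrSelf u w :=
  pairwise_not_ancestorOrSelf_of_depth_eq (m := F.depth v + 1)
    fun _ hc => F.depth_parent _ _ (mem_children.mp hc)

lemma pairwise_roots : (F.roots : Set V).Pairwise fun u w => ¬F.AncestorOrSelf u w :=
  pairwise_not_ancestorOrSelf_of_depth_eq (m := 1) fun _ hr => F.depth_root _ (mem_roots.mp hr)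

lemma exists_root_ancestorOrSelf (v : V) : ∃ r ∈ F.roots, F.AncestorOrSelf r v := by
  induction hm : F.depth v using Nat.strong_induction_on generalizing v with
  | _ m ih =>
    cases h : F.parent v with
    | none => exact ⟨v, mem_roots.mpr h, ReflTransGen.refl⟩
    | some u =>
      obtain ⟨r, hr, hru⟩ := ih _ (hm ▸ Ancestor.depth_lt (TransGen.single h)) u rfl
      exact ⟨r, hr, hru.trans (ReflTransGen.single h)⟩

variable [DecidableEq V]

lemma pairwise_children_erase (v b : V) :
    ((F.children v).erase b : Set V).Pairwise fun u w => ¬F.AncestorOrSelf u w :=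
  (pairwise_children v).mono (by simp)

lemma subtree_eq_insert_biUnion (v : V) :
    F.subtree v = insert v ((F.children v).biUnion F.subtree) := by
  ext w
  simp only [mem_insert, mem_biUnion, mem_subtree, mem_children, AncestorOrSelf]
  rw [ReflTransGen.cases_tail_iff]
  constructor
  · rintro (rfl | ⟨c, hwc, hc⟩)
    exacts [Or.inl rfl, Or.inr ⟨c, hc, hwc⟩]
  · rintro (rfl | ⟨c, hc, hwc⟩)
    exacts [Or.inl rfl, Or.inr ⟨c, hwc, hc⟩]

lemma ancestor_of_mem_biUnion_children {v w : V} (hw : w ∈ (F.children v).biUnion F.subtree) :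
    F.Ancestor v w := by
  obtain ⟨c, hc, hw⟩ := mem_biUnion.mp hw
  exact TransGen.tail' (mem_subtree.mp hw) (mem_children.mp hc)

lemma card_biUnion_subtree {R : Finset V}
    (hR : (R : Set V).Pairwise fun u v => ¬F.AncestorOrSelf u v) :
    #(R.biUnion F.subtree) = ∑ r ∈ R, #(F.subtree r) :=
  card_biUnion fun _ hu _ hv huv => disjoint_left.mpr fun _ hwu hwv =>
    (not_comparable_of_mem_subtree hR hu hv huv hwu hwv).1 ReflTransGen.refl

lemma card_subtree (v : V) : #(F.subtree v) = #((F.children v).biUnion F.subtree) + 1 := by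
  rw [subtree_eq_insert_biUnion, card_insert_of_notMem]
  exact fun hv => ancestor_irrefl v (ancestor_of_mem_biUnion_children hv)

lemma card_biUnion_children {v b : V} (hb : b ∈ F.children v) :
    #((F.children v).biUnion F.subtree) =
      #(((F.children v).erase b).biUnion F.subtree) + #(F.subtree b) := by
  rw [card_biUnion_subtree (pairwise_children v),
    card_biUnion_subtree (pairwise_children_erase v b), sum_erase_add _ _ hb]

lemma card_subtree_le_of_heavy {k : ℕ} {v b c : V} (hv : #(F.subtree v) ≤ 2 ^ (k + 1))
    (hb : b ∈ F.children v) (hbk : 2 ^ k < #(F.subtree b)) (hc : c ∈ F.children v)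
    (hcb : c ≠ b) : #(F.subtree c) ≤ 2 ^ k := by
  have hsum : #(F.subtree c) + #(F.subtree b) ≤ #((F.children v).biUnion F.subtree) := by
    rw [card_biUnion_subtree (pairwise_children v), ← sum_pair (f := fun r => #(F.subtree r)) hcb]
    exact sum_le_sum_of_subset (insert_subset hc (singleton_subset_iff.mpr hb))
  have := card_subtree (F := F) v
  rw [pow_succ] at hv
  omega

lemma biUnion_roots_subtree : F.roots.biUnion F.subtree = univ :=
  eq_univ_of_forall fun v => by
    obtain ⟨r, hr, hrv⟩ := exists_root_ancestorOrSelf (F := F) v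
    exact mem_biUnion.mpr ⟨r, hr, mem_subtree.mpr hrv⟩

end Structure

section Labeling

variable {V : Type} [Fintype V] {F : RootedForest V} {d : ℕ} {P : ℕ × ℕ × ℕ → Prop}
  {S T : Finset V} {a b c : ℕ} {L M : V → ℕ × ℕ × ℕ}

variable (F d P S a b L) in
structure IsAncestryLabeling : Prop where
  prop : ∀ v ∈ S, P (L v)
  subset : ∀ v ∈ S, tripInterval d (L v) ⊆ Set.Ico a b
  nonempty : ∀ v ∈ S, (tripInterval d (L v)).Nonempty
  ssubset : ∀ u ∈ S, ∀ v ∈ S, F.Ancestor u v → tripInterval d (L v) ⊂ tripInterval d (L u)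
  disjoint : ∀ u ∈ S, ∀ v ∈ S, ¬F.AncestorOrSelf u v → ¬F.AncestorOrSelf v u →
    Disjoint (tripInterval d (L u)) (tripInterval d (L v))

namespace IsAncestryLabeling

lemma empty : IsAncestryLabeling F d P ∅ a b L where
  prop := by simp
  subset := by simp
  nonempty := by simp
  ssubset := by simp
  disjoint := by simp

lemma mono {Q : ℕ × ℕ × ℕ → Prop} {a' b' : ℕ} (h : IsAncestryLabeling F d P S a b L)
    (hPQ : ∀ t, P t → tripInterval d t ⊆ Set.Ico a b → Q t) (ha : a' ≤ a) (hb : b ≤ b') :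
    IsAncestryLabeling F d Q S a' b' L where
  prop v hv := hPQ _ (h.prop v hv) (h.subset v hv)
  subset v hv := (h.subset v hv).trans (Set.Ico_subset_Ico ha hb)
  nonempty := h.nonempty
  ssubset := h.ssubset
  disjoint := h.disjoint

lemma lt_of_mem (h : IsAncestryLabeling F d P S a b L) {v : V} (hv : v ∈ S) : a < b := by
  obtain ⟨y, hy⟩ := h.nonempty v hv
  have := h.subset v hv hy
  exact this.1.trans_lt this.2

lemma union [DecidableEq V] (hS : IsAncestryLabeling F d P S a b L)
    (hT : IsAncestryLabeling F d P T b c M)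
    (hST : ∀ u ∈ S, ∀ v ∈ T, ¬F.AncestorOrSelf u v ∧ ¬F.AncestorOrSelf v u)
    (hab : a ≤ b) (hbc : b ≤ c) :
    IsAncestryLabeling F d P (S ∪ T) a c (S.piecewise L M) := by
  have hT' : ∀ v ∈ S ∪ T, v ∉ S → v ∈ T := fun v hv h => (mem_union.mp hv).resolve_left h
  have hdisj : ∀ u ∈ S, ∀ v ∈ S ∪ T, v ∉ S →
      Disjoint (tripInterval d (S.piecewise L M u)) (tripInterval d (S.piecewise L M v)) := by
    intro u hu v hv hvS
    rw [piecewise_eq_of_mem _ _ _ hu, piecewise_eq_of_notMem _ _ _ hvS]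
    exact Set.disjoint_of_subset (hS.subset u hu) (hT.subset v (hT' v hv hvS))
      Set.Ico_disjoint_Ico_same
  refine ⟨fun v hv => ?_, fun v hv => ?_, fun v hv => ?_, fun u hu v hv huv => ?_,
    fun u hu v hv huv hvu => ?_⟩
  · by_cases h : v ∈ S
    · simpa [h] using hS.prop v h
    · simpa [h] using hT.prop v (hT' v hv h)
  · by_cases h : v ∈ S
    · simpa [h] using (hS.subset v h).trans (Set.Ico_subset_Ico le_rfl hbc)
    · simpa [h] using (hT.subset v (hT' v hv h)).trans (Set.Ico_subset_Ico hab le_rfl)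
  · by_cases h : v ∈ S
    · simpa [h] using hS.nonempty v h
    · simpa [h] using hT.nonempty v (hT' v hv h)
  · by_cases hu' : u ∈ S <;> by_cases hv' : v ∈ S
    · simpa [hu', hv'] using hS.ssubset u hu' v hv' huv
    · exact absurd huv.ancestorOrSelf (hST u hu' v (hT' v hv hv')).1
    · exact absurd huv.ancestorOrSelf (hST v hv' u (hT' u hu hu')).2
    · simpa [hu', hv'] using hT.ssubset u (hT' u hu hu') v (hT' v hv hv') huv
  · by_cases hu' : u ∈ S <;> by_cases hv' : v ∈ S
    · simpa [hu', hv'] using hS.disjoint u hu' v hv' huv hvu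
    · exact hdisj u hu' v hv hv'
    · exact (hdisj v hv' u hu hu').symm
    · simpa [hu', hv'] using hT.disjoint u (hT' u hu hu') v (hT' v hv hv') huv hvu

/-- The point `a` is covered by the new root alone, which makes its interval strictly larger. -/
lemma insert_root [DecidableEq V] {v : V} {t : ℕ × ℕ × ℕ}
    (hS : IsAncestryLabeling F d P S (a + 1) b L) (ht : P t)
    (htrip : tripInterval d t = Set.Ico a b) (hab : a < b) (hanc : ∀ w ∈ S, F.Ancestor v w) :
    IsAncestryLabeling F d P (insert v S) a b (Function.update L v t) := by
  have hvS : v ∉ S := fun hv => ancestor_irrefl v (hanc v hv)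
  have hL : ∀ w ∈ S, Function.update L v t w = L w :=
    fun w hw => Function.update_of_ne (ne_of_mem_of_not_mem hw hvS) _ _
  have hsub : ∀ w ∈ S, tripInterval d (L w) ⊂ Set.Ico a b := fun w hw =>
    Set.ssubset_of_subset_of_ssubset (hS.subset w hw)
      ⟨Set.Ico_subset_Ico (by omega) le_rfl, fun h => by simpa using h ⟨le_rfl, hab⟩⟩
  refine ⟨fun w hw => ?_, fun w hw => ?_, fun w hw => ?_, fun u hu w hw huw => ?_,
    fun u hu w hw huw hwu => ?_⟩
  · rcases mem_insert.mp hw with rfl | hw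
    exacts [by simpa using ht, by simpa [hL w hw] using hS.prop w hw]
  · rcases mem_insert.mp hw with rfl | hw
    · simp [htrip]
    · simpa [hL w hw] using (hsub w hw).subset
  · rcases mem_insert.mp hw with rfl | hw
    · simpa [htrip] using hab
    · simpa [hL w hw] using hS.nonempty w hw
  · rcases mem_insert.mp hu with rfl | hu' <;> rcases mem_insert.mp hw with rfl | hw'
    · exact absurd huw (ancestor_irrefl _)
    · simpa [hL w hw', htrip] using hsub w hw'
    · exact absurd (TransGen.trans huw (hanc u hu')) (ancestor_irrefl _)
    · simpa [hL u hu', hL w hw'] using hS.ssubset u hu' w hw' huw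
  · rcases mem_insert.mp hu with rfl | hu' <;> rcases mem_insert.mp hw with rfl | hw'
    · exact absurd ReflTransGen.refl huw
    · exact absurd (hanc w hw').ancestorOrSelf huw
    · exact absurd (hanc u hu').ancestorOrSelf hwu
    · simpa [hL u hu', hL w hw'] using hS.disjoint u hu' w hw' huw hwu

lemma ancestor_iff (h : IsAncestryLabeling F d P S a b L) {u v : V} (hu : u ∈ S) (hv : v ∈ S) :
    F.Ancestor u v ↔ tripInterval d (L v) ⊂ tripInterval d (L u) := by
  refine ⟨h.ssubset u hu v hv, fun huv => ?_⟩
  by_contra hnot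
  by_cases hvu : F.AncestorOrSelf v u
  · rcases ancestorOrSelf_iff.mp hvu with rfl | hvu
    exacts [huv.ne rfl, ssubset_asymm huv (h.ssubset v hv u hu hvu)]
  · have hdisj := h.disjoint u hu v hv (fun h' => (ancestorOrSelf_iff.mp h').elim
      (fun e => hvu (e ▸ ReflTransGen.refl)) hnot) hvu
    obtain ⟨x, hx⟩ := h.nonempty v hv
    exact Set.disjoint_left.mp hdisj (huv.subset hx) hx

lemma injOn (h : IsAncestryLabeling F d P S a b L) : Set.InjOn L S := by
  intro u hu v hv huv
  by_contra hne
  have hnot : ∀ {x y}, x ∈ S → y ∈ S → x ≠ y → L x = L y → ¬F.AncestorOrSelf x y :=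
    fun hx hy hxy hL hanc => (ancestorOrSelf_iff.mp hanc).elim hxy
      fun hanc => (h.ssubset _ hx _ hy hanc).ne (by rw [hL])
  have hdisj := h.disjoint u hu v hv (hnot hu hv hne huv) (hnot hv hu (Ne.symm hne) huv.symm)
  rw [huv, disjoint_self, Set.bot_eq_empty] at hdisj
  exact (h.nonempty v hv).ne_empty hdisj

variable [DecidableEq V]

lemma subtree_of_children {v : V} {α β : ℕ} {t : ℕ × ℕ × ℕ}
    (h : IsAncestryLabeling F d P ((F.children v).biUnion F.subtree) (α + 1) β L) (ht : P t)
    (htrip : tripInterval d t = Set.Ico α β) (hαβ : α < β) :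
    IsAncestryLabeling F d P (F.subtree v) α β (Function.update L v t) := by
  rw [subtree_eq_insert_biUnion]
  exact h.insert_root ht htrip hαβ fun _ => ancestor_of_mem_biUnion_children

lemma biUnion_children {v w : V} (hw : w ∈ F.children v)
    (hL : IsAncestryLabeling F d P (((F.children v).erase w).biUnion F.subtree) a b L)
    (hM : IsAncestryLabeling F d P (F.subtree w) b c M) (hab : a ≤ b) (hbc : b ≤ c) :
    IsAncestryLabeling F d P ((F.children v).biUnion F.subtree) a c
      ((((F.children v).erase w).biUnion F.subtree).piecewise L M) := by
  have hsplit : (F.children v).biUnion F.subtree =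
      ((F.children v).erase w).biUnion F.subtree ∪ F.subtree w := by
    conv_lhs => rw [← insert_erase hw]
    rw [biUnion_insert, union_comm]
  rw [hsplit]
  refine hL.union hM (fun x hx y hy => ?_) hab hbc
  obtain ⟨u, hu, hx⟩ := mem_biUnion.mp hx
  exact not_comparable_of_mem_subtree (pairwise_children v) (mem_of_mem_erase hu) hw
    (ne_of_mem_erase hu) hx hy

end IsAncestryLabeling

end Labeling

section Construction

variable {V : Type} [Fintype V] [DecidableEq V] {F : RootedForest V} {d : ℕ}

variable (F d) in
def Labelable (k : ℕ) (S : Finset V) : Prop :=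
  ∀ a, ∃ L, IsAncestryLabeling F d (Admissible d k) S a (a + ⌊cseq k * #S⌋₊) L

variable (F d) in
def ForestsLabelable (k : ℕ) : Prop :=
  ∀ R : Finset V, (R : Set V).Pairwise (fun u v => ¬F.AncestorOrSelf u v) →
    (∀ r ∈ R, #(F.subtree r) ≤ 2 ^ k) → Labelable F d k (R.biUnion F.subtree)

lemma labelable_subtree_zero {v : V} (hv : #(F.subtree v) ≤ 2 ^ 0) :
    Labelable F d 0 (F.subtree v) := by
  have hsub : F.subtree v = {v} :=
    eq_singleton_iff_unique_mem.mpr ⟨self_mem_subtree v, fun w hw =>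
      card_le_one.mp hv w hw v (self_mem_subtree v)⟩
  intro a
  have hwidth : a + ⌊cseq 0 * #(F.subtree v)⌋₊ = a + 1 := by simp [hsub, cseq]
  rw [hwidth, hsub, ← insert_empty]
  exact ⟨_, (IsAncestryLabeling.empty (L := fun _ => (0, a, 0))).insert_root (t := (0, a, 0))
    (Or.inl ⟨rfl, rfl⟩) (by rw [Set.Ico_add_one_right_eq_Icc, Set.Icc_self]; rfl) (by omega)
    (by simp)⟩

lemma forestsLabelable_of_subtree {k : ℕ}
    (htree : ∀ v, #(F.subtree v) ≤ 2 ^ k → Labelable F d k (F.subtree v)) :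
    ForestsLabelable F d k := by
  intro R hR hsmall
  induction R using Finset.induction_on with
  | empty => exact fun a => ⟨fun _ => (0, 0, 0), by simpa using IsAncestryLabeling.empty⟩
  | insert r R hr ih =>
    intro a
    have hR' : (R : Set V).Pairwise fun u v => ¬F.AncestorOrSelf u v := hR.mono (by simp)
    obtain ⟨L, hL⟩ := htree r (hsmall r (mem_insert_self r R)) a
    obtain ⟨M, hM⟩ := ih hR' (fun r' hr' => hsmall r' (mem_insert_of_mem hr'))
      (a + ⌊cseq k * #(F.subtree r)⌋₊)
    have hsep : ∀ u ∈ F.subtree r, ∀ w ∈ R.biUnion F.subtree,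
        ¬F.AncestorOrSelf u w ∧ ¬F.AncestorOrSelf w u := by
      intro u hu w hw
      obtain ⟨r', hr', hw⟩ := mem_biUnion.mp hw
      exact not_comparable_of_mem_subtree hR (mem_insert_self r R) (mem_insert_of_mem hr')
        (fun h => hr (h ▸ hr')) hu hw
    have hcard : #((insert r R).biUnion F.subtree) = #(F.subtree r) + #(R.biUnion F.subtree) := by
      rw [card_biUnion_subtree hR, card_biUnion_subtree hR', sum_insert hr]
    rw [hcard, biUnion_insert]
    refine ⟨_, (hL.union hM hsep le_self_add le_self_add).mono (fun _ ht _ => ht) le_rfl ?_⟩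
    rw [add_assoc]
    exact Nat.add_le_add_left (floor_cseq_mul_add_le k _ _) a

lemma ForestsLabelable.exists_aligned {k : ℕ} (hk : ForestsLabelable F d k) {R : Finset V}
    (hR : (R : Set V).Pairwise fun u v => ¬F.AncestorOrSelf u v)
    (hsmall : ∀ r ∈ R, #(F.subtree r) ≤ 2 ^ k) (α : ℕ) {x : ℕ} (hx : 0 < x) :
    ∃ β L, x ∣ β ∧ α + 1 + ⌊cseq k * #(R.biUnion F.subtree)⌋₊ ≤ β ∧
      β ≤ α + ⌊cseq k * #(R.biUnion F.subtree)⌋₊ + x ∧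
      IsAncestryLabeling F d (PreAdmissible d k) (R.biUnion F.subtree) (α + 1) β L := by
  obtain ⟨L, hL⟩ := hk R hR hsmall (α + 1)
  have hlt := Nat.lt_mul_div_succ (α + ⌊cseq k * #(R.biUnion F.subtree)⌋₊) hx
  exact ⟨_, L, dvd_mul_right _ _, by omega, Nat.mul_div_add_one_le _ _,
    hL.mono (fun t ht _ => Or.inl ht) le_rfl (by omega)⟩

lemma IsAncestryLabeling.subtree_of_children_levelTriplet {k : ℕ} {v : V} {α β : ℕ}
    {L : V → ℕ × ℕ × ℕ} (hd : 1 ≤ d) (hα : xval d (k + 1) ∣ α) (hβ : xval d (k + 1) ∣ β)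
    (hαβ : α < β)
    (h : IsAncestryLabeling F d (PreAdmissible d k) ((F.children v).biUnion F.subtree) (α + 1) β L) :
    IsAncestryLabeling F d (PreAdmissible d k) (F.subtree v) α β
      (Function.update L v (levelTriplet d (k + 1) α β)) := by
  have hx : 0 < xval d (k + 1) := one_le_xval hd _
  have hj : 1 ≤ (β - α) / xval d (k + 1) := (Nat.le_div_iff_mul_le hx).mpr <| by
    have := Nat.le_of_dvd (by omega) (Nat.dvd_sub hβ hα)
    omega
  exact h.subtree_of_children (Or.inr ⟨rfl, hj⟩)
    (tripInterval_levelTriplet k.succ_ne_zero hα hβ hαβ.le) hαβ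

/-- `q` is the length of the heavy path starting at `v`, and `M` the number of the other vertices
of its subtree. -/
lemma exists_heavyPath_labeling (hd : 1 ≤ d) (hdepth : ∀ v, F.depth v ≤ d) {k : ℕ}
    (hk : ForestsLabelable F d k) (v : V) (hheavy : 2 ^ k < #(F.subtree v))
    (hlight : #(F.subtree v) ≤ 2 ^ (k + 1)) (α : ℕ) (hα : xval d (k + 1) ∣ α) :
    ∃ q M β L, 1 ≤ q ∧ q + F.depth v ≤ d ∧ M + q = #(F.subtree v) ∧ xval d (k + 1) ∣ β ∧
      β ≤ α + ⌊cseq k * M⌋₊ + q * xval d (k + 1) ∧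
      IsAncestryLabeling F d (PreAdmissible d k) (F.subtree v) α β L := by
  have hx : 0 < xval d (k + 1) := one_le_xval hd _
  induction hN : #(F.subtree v) using Nat.strong_induction_on generalizing v α with
  | _ N ih =>
  subst hN
  suffices ∃ q M β L, 1 ≤ q ∧ q + F.depth v ≤ d ∧ M + q = #(F.subtree v) ∧
      xval d (k + 1) ∣ β ∧ α < β ∧ β ≤ α + ⌊cseq k * M⌋₊ + q * xval d (k + 1) ∧
      IsAncestryLabeling F d (PreAdmissible d k) ((F.children v).biUnion F.subtree) (α + 1) β L by
    obtain ⟨q, M, β, L, hq, hqd, hMq, hβ, hαβ, hβle, hL⟩ := this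
    exact ⟨q, M, β, _, hq, hqd, hMq, hβ, hβle,
      hL.subtree_of_children_levelTriplet hd hα hβ hαβ⟩
  have hcard := card_subtree (F := F) v
  by_cases hb : ∃ b ∈ F.children v, 2 ^ k < #(F.subtree b)
  · obtain ⟨b, hb, hbk⟩ := hb
    obtain ⟨α', L, hα', hXα', hα'X, hL⟩ := hk.exists_aligned (pairwise_children_erase v b)
      (fun c hc => card_subtree_le_of_heavy hlight hb hbk (mem_of_mem_erase hc)
        (ne_of_mem_erase hc)) α hx
    have hcardX := card_biUnion_children (F := F) hb
    set X := ((F.children v).erase b).biUnion F.subtree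
    obtain ⟨qb, Mb, β, Lb, hqb, hqbd, hMqb, hβ, hβle, hLb⟩ :=
      ih _ (by omega) b hbk (by omega) α' hα' rfl
    have hα'β := hLb.lt_of_mem (self_mem_subtree b)
    have hfloor := floor_cseq_mul_add_le k #X Mb
    have hdb : F.depth b = F.depth v + 1 := F.depth_parent _ _ (mem_children.mp hb)
    exact ⟨qb + 1, #X + Mb, β, _, by omega, by omega, by omega, hβ, by omega,
      by rw [add_mul, one_mul]; omega, hL.biUnion_children hb hLb (by omega) hα'β.le⟩
  · push Not at hb
    obtain ⟨β, L, hβ, hXβ, hβX, hL⟩ := hk.exists_aligned (pairwise_children v) hb α hx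
    obtain ⟨w, hw⟩ : ((F.children v).biUnion F.subtree).Nonempty :=
      card_pos.mp (by have := Nat.one_le_two_pow (n := k); omega)
    obtain ⟨c, hc, -⟩ := mem_biUnion.mp hw
    have hdc : F.depth c = F.depth v + 1 := F.depth_parent _ _ (mem_children.mp hc)
    exact ⟨1, #((F.children v).biUnion F.subtree), β, L, le_rfl, by have := hdepth c; omega,
      by omega, hβ, by omega, by omega, hL⟩

lemma labelable_subtree_succ (hd : 1 ≤ d) (hdepth : ∀ v, F.depth v ≤ d) {k : ℕ}
    (hk : ForestsLabelable F d k) {v : V} (hv : #(F.subtree v) ≤ 2 ^ (k + 1)) :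
    Labelable F d (k + 1) (F.subtree v) := by
  intro a
  by_cases hsmall : #(F.subtree v) ≤ 2 ^ k
  · obtain ⟨L, hL⟩ := hk {v} (by simp) (by simpa using hsmall) a
    rw [singleton_biUnion] at hL
    exact ⟨L, hL.mono (fun t ht _ => ht.mono k.le_succ) le_rfl
      (by gcongr; exact cseq_mono k.le_succ)⟩
  push Not at hsmall
  have hx : 0 < xval d (k + 1) := one_le_xval hd _
  obtain ⟨q, M, β, L, hq, hqd, hMq, hβ, hβle, hL⟩ := exists_heavyPath_labeling hd hdepth hk v
    hsmall hv (xval d (k + 1) * (a / xval d (k + 1) + 1)) (dvd_mul_right _ _)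
  have hbudget := floor_cseq_add_le (d := d) hq (by have := one_le_depth (F := F) v; omega)
    (hMq ▸ hsmall)
  rw [hMq, add_mul, one_mul] at hbudget
  have haα := Nat.lt_mul_div_succ a hx
  have hαa := Nat.mul_div_add_one_le a (xval d (k + 1))
  refine ⟨L, hL.mono (fun t ht hsub => ?_) haα.le (by omega)⟩
  rcases ht with ht | ⟨hi, hj⟩
  · exact ht.mono k.le_succ
  refine Or.inr ⟨by omega, hi.le, hj, lt_Jval hd (by omega) ?_⟩
  have hlen := mul_le_sub_of_tripInterval_subset hd (by omega) hj hsub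
  have hW : xval d t.1 * t.2.2 < ⌊cseq (k + 1) * #(F.subtree v)⌋₊ := by rw [hi] at hlen ⊢; omega
  calc (xval d t.1 * t.2.2 : ℚ) < ⌊cseq (k + 1) * #(F.subtree v)⌋₊ := by exact_mod_cast hW
    _ ≤ cseq (k + 1) * #(F.subtree v) := Nat.floor_le (mul_nonneg (cseq_nonneg _) (by simp))
    _ ≤ cseq t.1 * 2 ^ t.1 := by
      rw [hi]; gcongr; exacts [cseq_nonneg _, by exact_mod_cast hv]

lemma forestsLabelable (hd : 1 ≤ d) (hdepth : ∀ v, F.depth v ≤ d) (k : ℕ) :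
    ForestsLabelable F d k := by
  induction k with
  | zero => exact forestsLabelable_of_subtree fun _ => labelable_subtree_zero
  | succ k ih => exact forestsLabelable_of_subtree fun _ => labelable_subtree_succ hd hdepth ih

end Construction

end RootedForest

theorem ancestry_mapping_exists_general (n d : ℕ) (hd : 1 ≤ d)
    (k : ℕ)
    (V : Type) [Fintype V] (F : RootedForest V)
    (hsize : Fintype.card V ≤ 2 ^ k) (hdepth : ∀ v, F.depth v ≤ d)
    (a : ℕ)
    (hab : a + ⌊cseq k * (Fintype.card V : ℚ)⌋₊ ≤ 3 * n) :
    ∃ L : V → ℕ × ℕ × ℕ,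
      (∀ v, L v ∈ Uset n d k (Set.Ico a (a + ⌊cseq k * (Fintype.card V : ℚ)⌋₊))) ∧
      Function.Injective L ∧
      ∀ u v : V, F.Ancestor u v ↔ tripInterval d (L v) ⊂ tripInterval d (L u) := by
  classical
  obtain ⟨L, hL⟩ := F.forestsLabelable hd hdepth k F.roots F.pairwise_roots
    (fun r _ => (card_le_univ _).trans hsize) a
  rw [F.biUnion_roots_subtree, card_univ] at hL
  refine ⟨L, fun v => ?_, fun u v => hL.injOn (mem_univ u) (mem_univ v),
    fun u v => hL.ancestor_iff (mem_univ u) (mem_univ v)⟩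
  exact mem_Uset_of_admissible hd (hL.prop v (mem_univ v)) (hL.subset v (mem_univ v)) hab

/-- Main technical claim: for every `k ≤ log₂ n`, every rooted forest `F` with at
most `2^k` nodes and depth at most `d`, and every interval `I = [a, a + ⌊c_k·|F|⌋)`
contained in `[1, 3n)`, there is an ancestry mapping of `F` into `U_k(I)`,
i.e. an injection `L` such that `u` is a strict ancestor of `v` iff the interval
associated with `L v` is strictly contained in the one associated with `L u`. -/
theorem ancestry_mapping_exists (n d : ℕ) (hn : ∃ m : ℕ, n = 2 ^ m) (hd : 1 ≤ d)
    (k : ℕ) (hk : k ≤ Nat.log 2 n)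
    (V : Type) [Fintype V] (F : RootedForest V)
    (hsize : Fintype.card V ≤ 2 ^ k) (hdepth : ∀ v, F.depth v ≤ d)
    (a : ℕ) (ha : 1 ≤ a)
    (hab : a + ⌊cseq k * (Fintype.card V : ℚ)⌋₊ ≤ 3 * n) :
    ∃ L : V → ℕ × ℕ × ℕ,
      (∀ v, L v ∈ Uset n d k (Set.Ico a (a + ⌊cseq k * (Fintype.card V : ℚ)⌋₊))) ∧
      Function.Injective L ∧
      ∀ u v : V, F.Ancestor u v ↔ tripInterval d (L v) ⊂ tripInterval d (L u) :=
  ancestry_mapping_exists_general n d hd k V F hsize hdepth a hab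
end
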